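/- arXiv:2405.09504 — 4 statements merged into one kernel-verified Lean document; each statement's English description precedes it below -/
import Mathlib

section
/- Let (A, α) be a coalgebra for F arising as the colimit (with injections π_i) of a diagram D : D → F-Coalg with D ∈ Fil, such that F preserves the colimit of V ∘ D. Then for every coalgebra (B, β) with Fil-presentable carrier B, every coalgebra morphism h : (B, β) → (A, α) factorizes in F-Coalg through some colimit injection π_j : (X_j, x_j) → (A, α), i.e., h = π_j ∘ h' for some coalgebra morphism h' : (B, β) → (X_j, x_j). -/
open CategoryTheory CategoryTheory.Limits Opposite

universe u

variable {𝒞 : Type u} [Category.{u} 𝒞]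

/-- An object `X` is `Fil`-presentable if its hom-functor preserves colimits of all
diagrams whose scheme lies in `Fil`. -/
def FilPresentable (Fil : Set Cat.{u, u}) (X : 𝒞) : Prop :=
  ∀ J ∈ Fil, ∀ D : J ⥤ 𝒞, Nonempty (PreservesColimit D (coyoneda.obj (op X)))

/-- The canonical slice category `𝒮/X` of arrows into `X` with domain in `𝒮`. -/
abbrev SliceCat (𝒮 : Set 𝒞) (X : 𝒞) : Type u :=
  ObjectProperty.FullSubcategory (fun f : Over X => f.left ∈ 𝒮)

/-- The canonical diagram `𝒮/X ⥤ 𝒞`, `(S, f) ↦ S`. -/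
abbrev canDiag (𝒮 : Set 𝒞) (X : 𝒞) : SliceCat 𝒮 X ⥤ 𝒞 :=
  ObjectProperty.ι _ ⋙ Over.forget X

/-- The canonical cocone over the canonical diagram, with tip `X`. -/
@[simps]
def canCocone (𝒮 : Set 𝒞) (X : 𝒞) : Cocone (canDiag 𝒮 X) where
  pt := X
  ι := { app := fun f => f.obj.hom
         naturality := fun f g h => by simp [Over.w h.hom] }

/-- A witness that `𝒞` is `Fil`-accessible: a set `Cp` of `Fil`-presentable objects
such that each canonical slice lies in `Fil` and each object is the colimit of its
canonical diagram. -/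
structure FilAccessibleData (Fil : Set Cat.{u, u}) (𝒞 : Type u) [Category.{u} 𝒞] where
  Cp : Set 𝒞
  presentable : ∀ S ∈ Cp, FilPresentable Fil S
  sliceInFil : ∀ X : 𝒞, Cat.of (SliceCat Cp X) ∈ Fil
  canColim : ∀ X : 𝒞, Nonempty (IsColimit (canCocone Cp X))

/-- An `F`-coalgebra is recursive if into every `F`-algebra there is a unique
coalgebra-to-algebra morphism. -/
def IsRecursive {F : 𝒞 ⥤ 𝒞} (R : Endofunctor.Coalgebra F) : Prop :=
  ∀ (A : 𝒞) (a : F.obj A ⟶ A), ∃! h : R.V ⟶ A, h = R.str ≫ F.map h ≫ a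

/-! Presentability of `B` lets the carrier map `h.f` factor as `g ≫ π_i` in `𝒞`. The two maps
`B.str ≫ F g` and `g ≫ x_i` into `F X_i` become equal in the colimit `F A` (because `h` and `π_i`
are coalgebra morphisms), so, by presentability again, they are already equalized by some
connecting map `X_i ⟶ X_k`; along it, `g` becomes a coalgebra morphism `B ⟶ (X_k, x_k)`. -/

namespace CategoryTheory.Endofunctor.Coalgebra

variable {C : Type*} [Category* C] {F : C ⥤ C}

lemma str_map_comp_eq_of_comp_eq {B X A : Coalgebra F} (h : B ⟶ A) (p : X ⟶ A)
    {g : B.V ⟶ X.V} (hg : g ≫ p.f = h.f) :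
    (B.str ≫ F.map g) ≫ F.map p.f = (g ≫ X.str) ≫ F.map p.f := by
  rw [Category.assoc, ← F.map_comp, hg, h.h, ← hg, Category.assoc, Category.assoc, p.h]

def homOfStrComp {B X Y : Coalgebra F} (g : B.V ⟶ X.V) (u : X ⟶ Y)
    (hg : (B.str ≫ F.map g) ≫ F.map u.f = (g ≫ X.str) ≫ F.map u.f) : B ⟶ Y where
  f := g ≫ u.f
  h := by rw [F.map_comp, ← Category.assoc, hg, Category.assoc, u.h, Category.assoc]

end CategoryTheory.Endofunctor.Coalgebra

open Endofunctor.Coalgebra in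
theorem coalg_hom_to_colim_factors_general
    (Fil : Set Cat.{u, u}) (hFil : ∀ J ∈ Fil, IsFiltered J)
    (F : 𝒞 ⥤ 𝒞)
    (J : Cat.{u, u}) (hJ : J ∈ Fil)
    (D : J ⥤ Endofunctor.Coalgebra F)
    (cc : Cocone D)
    (hcreate : IsColimit ((Endofunctor.Coalgebra.forget F).mapCocone cc))
    (hFpres : IsColimit (F.mapCocone ((Endofunctor.Coalgebra.forget F).mapCocone cc)))
    (B : Endofunctor.Coalgebra F) (hB : FilPresentable Fil B.V)
    (h : B ⟶ cc.pt) :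
    ∃ (j : J) (h' : B ⟶ D.obj j), h' ≫ cc.ι.app j = h := by
  have := hFil J hJ
  have := (hB J hJ (D ⋙ forget F)).some
  have := (hB J hJ ((D ⋙ forget F) ⋙ F)).some
  obtain ⟨i, (g : B.V ⟶ (D.obj i).V), hg⟩ := exists_hom_of_preservesColimit_coyoneda hcreate h.f
  obtain ⟨k, a, ha⟩ := exists_eq_of_preservesColimit_coyoneda_self hFpres
    (B.str ≫ F.map g) (g ≫ (D.obj i).str)
    (str_map_comp_eq_of_comp_eq h (cc.ι.app i) hg)
  refine ⟨k, homOfStrComp g (D.map a) ha, ?_⟩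
  ext
  change (g ≫ (D.map a).f) ≫ (cc.ι.app k).f = h.f
  rwa [Category.assoc, ← comp_f, cc.w]

/-- Let `(A, α) = cc.pt` be the colimit of a diagram `D : J ⥤ F-Coalg` with `J ∈ Fil`,
created from the colimit of `V ∘ D` in `𝒞`, and suppose `F` preserves that colimit.
Then every coalgebra morphism from a coalgebra `(B, β)` with `Fil`-presentable carrier
into `(A, α)` factorizes through one of the colimit injections in `F-Coalg`. -/
theorem coalg_hom_to_colim_factors
    (Fil : Set Cat.{u, u}) (hFil : ∀ J ∈ Fil, IsFiltered J)
    (acc : FilAccessibleData Fil 𝒞) (F : 𝒞 ⥤ 𝒞)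
    (J : Cat.{u, u}) (hJ : J ∈ Fil)
    (D : J ⥤ Endofunctor.Coalgebra F)
    (cc : Cocone D)
    (hcreate : IsColimit ((Endofunctor.Coalgebra.forget F).mapCocone cc))
    (hFpres : IsColimit (F.mapCocone ((Endofunctor.Coalgebra.forget F).mapCocone cc)))
    (B : Endofunctor.Coalgebra F) (hB : FilPresentable Fil B.V)
    (h : B ⟶ cc.pt) :
    ∃ (j : J) (h' : B ⟶ D.obj j), h' ≫ cc.ι.app j = h :=
  coalg_hom_to_colim_factors_general Fil hFil F J hJ D cc hcreate hFpres B hB h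
end

section
/- Let (A, α) be the colimit of the (full) diagram of all finrec coalgebras, assuming this colimit exists in C and is preserved by F, and that this diagram scheme lies in Fil. Then for every finrec coalgebra (C, c), there is a unique coalgebra morphism (C, c) → (A, α). -/
open CategoryTheory CategoryTheory.Limits Opposite

universe u

variable {𝒞 : Type u} [Category.{u} 𝒞]

/-- The full subcategory of recursive coalgebras with carrier in the generating set. -/
abbrev FinrecSub (F : 𝒞 ⥤ 𝒞) (Cp : Set 𝒞) : Type u :=
  ObjectProperty.FullSubcategory (fun R : Endofunctor.Coalgebra F => IsRecursive R ∧ R.V ∈ Cp)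

/-!
Since `C` is presentable and the colimit of its canonical diagram, its identity factors through
some `S` of the generating set: `C` is a retract of `S`, and transporting `c` along the retraction
makes `S` a recursive coalgebra of which `(C, c)` is a retract in `F-Coalg`. It therefore suffices
to show that the only coalgebra morphism from a finrec coalgebra `(S, s)` to `(A, α)` is its
colimit injection. Any such `u` factors through some injection as `y ≫ ι_j`; `y ≫ j.str` and
`s ≫ F y` agree after `F ι_j`, so, as `S` is presentable and `F` preserves the filtered colimit,
they already agree after `F` of some connecting map `j ⟶ k`. This makes `y` followed by that map
a coalgebra morphism `S ⟶ k` inside the full diagram, and naturality of the injections gives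
`u = ι_S`.
-/

namespace CategoryTheory

open Endofunctor

namespace Retract

variable {C : Type*} [Category* C] {F : C ⥤ C} {R : Coalgebra F} {S : C}

abbrev coalgebra (e : Retract R.V S) : Coalgebra F where
  V := S
  str := e.r ≫ R.str ≫ F.map e.i

def coalgebraRetract (e : Retract R.V S) : Retract R e.coalgebra where
  i := { f := e.i, h := by simp }
  r := { f := e.r, h := by simp [← F.map_comp] }
  retract := by ext; simp

end Retract

theorem Retract.isRecursive_coalgebra {F : 𝒞 ⥤ 𝒞} {R : Coalgebra F} {S : 𝒞}
    (e : Retract R.V S) (hR : IsRecursive R) : IsRecursive e.coalgebra := by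
  intro B b
  obtain ⟨h, hh, huniq⟩ := hR B b
  refine ⟨e.r ≫ h, ?_, fun k (hk : k = _) => ?_⟩
  · dsimp only
    rw [Category.assoc, Category.assoc, ← F.map_comp_assoc, e.retract_assoc, ← hh]
  · have hik : e.i ≫ k = h := huniq _ <| calc
      e.i ≫ k = e.i ≫ e.coalgebra.str ≫ F.map k ≫ b := by rw [← hk]
      _ = R.str ≫ F.map (e.i ≫ k) ≫ b := by simp
    calc k = e.coalgebra.str ≫ F.map k ≫ b := hk
      _ = e.r ≫ R.str ≫ F.map (e.i ≫ k) ≫ b := by simp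
      _ = e.r ≫ h := by rw [hik, ← hh]

theorem Endofunctor.Coalgebra.hom_eq_ι_of_isColimit {C : Type*} [Category* C] {F : C ⥤ C}
    {J : Type*} [Category* J] [IsFiltered J] {D : J ⥤ Coalgebra F} [D.Full] {c : Cocone D}
    (hc : IsColimit ((Coalgebra.forget F).mapCocone c))
    (hFc : IsColimit (F.mapCocone ((Coalgebra.forget F).mapCocone c))) (i : J)
    [PreservesColimit (D ⋙ Coalgebra.forget F) (coyoneda.obj (op (D.obj i).V))]
    [PreservesColimit ((D ⋙ Coalgebra.forget F) ⋙ F) (coyoneda.obj (op (D.obj i).V))]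
    (u : D.obj i ⟶ c.pt) : u = c.ι.app i := by
  obtain ⟨j, y, hy⟩ : ∃ j, ∃ y : (D.obj i).V ⟶ (D.obj j).V, y ≫ (c.ι.app j).f = u.f :=
    exists_hom_of_preservesColimit_coyoneda hc u.f
  have hsq : (y ≫ (D.obj j).str) ≫ F.map (c.ι.app j).f
      = ((D.obj i).str ≫ F.map y) ≫ F.map (c.ι.app j).f := by
    rw [Category.assoc, (c.ι.app j).h, reassoc_of% hy, Category.assoc, ← F.map_comp, hy, u.h]
    rfl
  obtain ⟨k, a, ha⟩ : ∃ k, ∃ a : j ⟶ k, (y ≫ (D.obj j).str) ≫ F.map (D.map a).f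
      = ((D.obj i).str ≫ F.map y) ≫ F.map (D.map a).f :=
    exists_eq_of_preservesColimit_coyoneda_self hFc _ _ hsq
  let w : D.obj i ⟶ D.obj k :=
    { f := y ≫ (D.map a).f
      h := by
        rw [F.map_comp, ← Category.assoc, ← ha, Category.assoc, (D.map a).h, Category.assoc] }
  ext
  calc u.f = y ≫ (D.map a).f ≫ (c.ι.app k).f := by
        rw [← hy, ← c.w a]; rfl
    _ = (D.map (D.preimage w) ≫ c.ι.app k).f := by simp [w]
    _ = (c.ι.app i).f := by rw [c.w]

end CategoryTheory

theorem finrec_universal_property_general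
    (Fil : Set Cat.{u, u}) (hFil : ∀ J ∈ Fil, IsFiltered J)
    (acc : FilAccessibleData Fil 𝒞) (F : 𝒞 ⥤ 𝒞)
    (hscheme : Cat.of (FinrecSub F acc.Cp) ∈ Fil)
    (cc : Cocone (ObjectProperty.ι
      (fun R : Endofunctor.Coalgebra F => IsRecursive R ∧ R.V ∈ acc.Cp)))
    (hcreate : IsColimit ((Endofunctor.Coalgebra.forget F).mapCocone cc))
    (hFpres : IsColimit (F.mapCocone ((Endofunctor.Coalgebra.forget F).mapCocone cc)))
    (R : Endofunctor.Coalgebra F) (hRrec : IsRecursive R)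
    (hRpres : FilPresentable Fil R.V) :
    Nonempty (Unique (R ⟶ cc.pt)) := by
  have : IsFiltered (FinrecSub F acc.Cp) := hFil _ hscheme
  obtain ⟨hcan⟩ := acc.canColim R.V
  have : PreservesColimit (canDiag acc.Cp R.V) (coyoneda.obj (op R.V)) :=
    (hRpres _ (acc.sliceInFil R.V) _).some
  obtain ⟨j, v, hv⟩ := exists_hom_of_preservesColimit_coyoneda hcan (𝟙 R.V)
  let e : Retract R.V j.obj.left := ⟨v, j.obj.hom, hv⟩
  let S : FinrecSub F acc.Cp := ⟨e.coalgebra, e.isRecursive_coalgebra hRrec, j.property⟩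
  have hSpres := acc.presentable _ j.property _ hscheme
  have : PreservesColimit (ObjectProperty.ι _ ⋙ Endofunctor.Coalgebra.forget F)
      (coyoneda.obj (op ((ObjectProperty.ι _).obj S).V)) := (hSpres _).some
  have : PreservesColimit ((ObjectProperty.ι _ ⋙ Endofunctor.Coalgebra.forget F) ⋙ F)
      (coyoneda.obj (op ((ObjectProperty.ι _).obj S).V)) := (hSpres _).some
  have hS (u : S.obj ⟶ cc.pt) : u = cc.ι.app S :=
    Endofunctor.Coalgebra.hom_eq_ι_of_isColimit hcreate hFpres S u
  let e' := e.coalgebraRetract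
  refine ⟨⟨⟨e'.i ≫ cc.ι.app S⟩, fun g => ?_⟩⟩
  calc g = (e'.i ≫ e'.r) ≫ g := by simp
    _ = e'.i ≫ cc.ι.app S := by rw [Category.assoc, hS (e'.r ≫ g)]

/-- Let `(A, α) = cc.pt` be the colimit of the full diagram of all finrec coalgebras
(with carrier in `Cp`), created from a colimit in `𝒞` which is preserved by `F`, where
the diagram scheme lies in `Fil`. Then for every finrec coalgebra `(C, c)` there is a
unique coalgebra morphism `(C, c) ⟶ (A, α)`. -/
theorem finrec_universal_property
    (Fil : Set Cat.{u, u}) (hFil : ∀ J ∈ Fil, IsFiltered J)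
    (acc : FilAccessibleData Fil 𝒞) (F : 𝒞 ⥤ 𝒞)
    (hcoprod : ∀ X Y : 𝒞, FilPresentable Fil X → FilPresentable Fil Y →
      HasBinaryCoproduct X Y)
    (hscheme : Cat.of (FinrecSub F acc.Cp) ∈ Fil)
    (cc : Cocone (ObjectProperty.ι
      (fun R : Endofunctor.Coalgebra F => IsRecursive R ∧ R.V ∈ acc.Cp)))
    (hcreate : IsColimit ((Endofunctor.Coalgebra.forget F).mapCocone cc))
    (hFpres : IsColimit (F.mapCocone ((Endofunctor.Coalgebra.forget F).mapCocone cc)))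
    (R : Endofunctor.Coalgebra F) (hRrec : IsRecursive R)
    (hRpres : FilPresentable Fil R.V) :
    Nonempty (Unique (R ⟶ cc.pt)) :=
  finrec_universal_property_general Fil hFil acc F hscheme cc hcreate hFpres R hRrec hRpres
end

section
/- Under the same assumptions, the terminal locally finrec coalgebra (A, α) — the colimit of all finrec coalgebras — has an invertible structure map α : A → FA, and (A, α⁻¹) is the initial F-algebra. -/
open CategoryTheory CategoryTheory.Limits Opposite

universe u

variable {𝒞 : Type u} [Category.{u} 𝒞]

/-- A coalgebra is locally finrec if it arises as a colimit (created by the forgetful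
functor) of a diagram of finrec coalgebras. -/
def LocallyFinrec (Fil : Set Cat.{u, u}) {F : 𝒞 ⥤ 𝒞}
    (R : Endofunctor.Coalgebra F) : Prop :=
  ∃ (J : Cat.{u, u}) (D : J ⥤ Endofunctor.Coalgebra F) (cc : Cocone D),
    (∀ j : J, IsRecursive (D.obj j) ∧ FilPresentable Fil (D.obj j).V) ∧
    Nonempty (IsColimit ((Endofunctor.Coalgebra.forget F).mapCocone cc)) ∧
    cc.pt = R

/-!
Every finrec coalgebra `R` is a weak retract of a coalgebra of the diagram: a retraction of its
carrier onto an object of `Cp` transports the structure map, and every coalgebra morphism out of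
`R` extends along the section. A coalgebra morphism from a diagram object into the colimit
`(A, α)` factors through a morphism of the diagram, by presentability of its carrier,
filteredness, and preservation of the colimit by `F`. Hence every finrec coalgebra has exactly
one coalgebra morphism into `(A, α)`. As `(FA, Fα)` is a colimit of finrec coalgebras, this
gives a coalgebra morphism `β : (FA, Fα) → (A, α)`; then `α ≫ β` agrees with the identity on
every colimit injection, and `β ≫ α = F (α ≫ β) = 1` as in Lambek's lemma. Finally `(A, α)` is
recursive as a colimit of recursive coalgebras, and a recursive coalgebra with invertible
structure map is an initial algebra.
-/

lemma FilPresentable.exists_hom_of_isColimit {Fil : Set Cat.{u, u}} {X : 𝒞}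
    (hX : FilPresentable Fil X) {J : Type u} [Category.{u} J] (hJ : Cat.of J ∈ Fil)
    {D : J ⥤ 𝒞} {c : Cocone D} (hc : IsColimit c) (f : X ⟶ c.pt) :
    ∃ (j : J) (p : X ⟶ D.obj j), p ≫ c.ι.app j = f := by
  have : PreservesColimit D (coyoneda.obj (op X)) := (hX _ hJ D).some
  exact exists_hom_of_preservesColimit_coyoneda hc f

lemma FilPresentable.exists_eq_of_isColimit_self {Fil : Set Cat.{u, u}} {X : 𝒞}
    (hX : FilPresentable Fil X) {J : Type u} [Category.{u} J] [IsFiltered J]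
    (hJ : Cat.of J ∈ Fil) {D : J ⥤ 𝒞} {c : Cocone D} (hc : IsColimit c) {i : J}
    (f g : X ⟶ D.obj i) (h : f ≫ c.ι.app i = g ≫ c.ι.app i) :
    ∃ (j : J) (a : i ⟶ j), f ≫ D.map a = g ≫ D.map a := by
  have : PreservesColimit D (coyoneda.obj (op X)) := (hX _ hJ D).some
  exact exists_eq_of_preservesColimit_coyoneda_self hc f g h

lemma FilAccessibleData.exists_retract {Fil : Set Cat.{u, u}} (acc : FilAccessibleData Fil 𝒞)
    {X : 𝒞} (hX : FilPresentable Fil X) : ∃ S ∈ acc.Cp, Nonempty (Retract X S) := by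
  obtain ⟨hcan⟩ := acc.canColim X
  obtain ⟨S, s, hs⟩ := hX.exists_hom_of_isColimit (acc.sliceInFil X) hcan (𝟙 X)
  exact ⟨S.obj.left, S.property, ⟨⟨s, S.obj.hom, hs⟩⟩⟩

namespace CategoryTheory.Endofunctor.Coalgebra

variable {F : 𝒞 ⥤ 𝒞}

abbrev ofRetract (R : Coalgebra F) {S : 𝒞} (e : Retract R.V S) : Coalgebra F :=
  ⟨S, e.r ≫ R.str ≫ F.map e.i⟩

def toOfRetract (R : Coalgebra F) {S : 𝒞} (e : Retract R.V S) : R ⟶ R.ofRetract e where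
  f := e.i
  h := show R.str ≫ F.map e.i = e.i ≫ e.r ≫ R.str ≫ F.map e.i by rw [e.retract_assoc]

lemma ofRetract_str_map_comp (R : Coalgebra F) {S : 𝒞} (e : Retract R.V S) {Y : 𝒞}
    (h : R.V ⟶ Y) : (R.ofRetract e).str ≫ F.map (e.r ≫ h) = e.r ≫ R.str ≫ F.map h := by
  change (e.r ≫ R.str ≫ F.map e.i) ≫ F.map (e.r ≫ h) = _
  rw [Category.assoc, Category.assoc, ← F.map_comp, e.retract_assoc]

/-- Although `e.r` is not a coalgebra morphism `R.ofRetract e ⟶ R`, it turns coalgebra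
morphisms out of `R` into coalgebra morphisms out of `R.ofRetract e`. -/
def ofRetractHom (R : Coalgebra F) {S : 𝒞} (e : Retract R.V S) {Y : Coalgebra F}
    (f : R ⟶ Y) : R.ofRetract e ⟶ Y where
  f := e.r ≫ f.f
  h := by rw [ofRetract_str_map_comp, f.h]; exact (Category.assoc _ _ _).symm

@[simp]
lemma toOfRetract_comp_ofRetractHom (R : Coalgebra F) {S : 𝒞} (e : Retract R.V S)
    {Y : Coalgebra F} (f : R ⟶ Y) : R.toOfRetract e ≫ R.ofRetractHom e f = f := by
  ext; exact e.retract_assoc f.f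

lemma Hom.comp_str_map_comp {R S : Coalgebra F} (g : R ⟶ S) {B : 𝒞} (h : S.V ⟶ B)
    (b : F.obj B ⟶ B) : g.f ≫ S.str ≫ F.map h ≫ b = R.str ≫ F.map (g.f ≫ h) ≫ b := by
  rw [F.map_comp, Category.assoc, Hom.h_assoc]

lemma cocone_ι_app_h {J : Type*} [Category J] {D : J ⥤ Coalgebra F} (c : Cocone D) (j : J) :
    (D.obj j).str ≫ F.map (c.ι.app j).f = (c.ι.app j).f ≫ c.pt.str :=
  (c.ι.app j).h

def isColimitOfForget {J : Type*} [Category J] {D : J ⥤ Coalgebra F} {c : Cocone D}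
    (hc : IsColimit ((forget F).mapCocone c)) : IsColimit c where
  desc s :=
    let d : c.pt.V ⟶ s.pt.V := hc.desc ((forget F).mapCocone s)
    have hd (j : J) : (c.ι.app j).f ≫ d = (s.ι.app j).f := hc.fac ((forget F).mapCocone s) j
    { f := d
      h := hc.hom_ext fun j => by
        change (c.ι.app j).f ≫ c.pt.str ≫ F.map d = (c.ι.app j).f ≫ d ≫ s.pt.str
        rw [← reassoc_of% cocone_ι_app_h, ← F.map_comp, hd, cocone_ι_app_h, reassoc_of% hd] }
  fac s j := by ext; exact hc.fac ((forget F).mapCocone s) j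
  uniq s m hm := by
    ext; exact hc.uniq ((forget F).mapCocone s) m.f fun j => congrArg Hom.f (hm j)

lemma exists_hom_of_isColimit {Fil : Set Cat.{u, u}} {J : Type u} [Category.{u} J]
    [IsFiltered J] (hJ : Cat.of J ∈ Fil) {D : J ⥤ Coalgebra F} {c : Cocone D}
    (hc : IsColimit ((forget F).mapCocone c))
    (hFc : IsColimit (F.mapCocone ((forget F).mapCocone c)))
    {R : Coalgebra F} (hR : FilPresentable Fil R.V) (f : R ⟶ c.pt) :
    ∃ (j : J) (g : R ⟶ D.obj j), g ≫ c.ι.app j = f := by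
  obtain ⟨j, f₀ : R.V ⟶ (D.obj j).V, hf₀ : f₀ ≫ (c.ι.app j).f = f.f⟩ :=
    hR.exists_hom_of_isColimit hJ hc f.f
  obtain ⟨k, a, ha⟩ := hR.exists_eq_of_isColimit_self hJ hFc (f₀ ≫ (D.obj j).str)
    (R.str ≫ F.map f₀) (by
      change (f₀ ≫ (D.obj j).str) ≫ F.map (c.ι.app j).f =
        (R.str ≫ F.map f₀) ≫ F.map (c.ι.app j).f
      rw [Category.assoc, cocone_ι_app_h, reassoc_of% hf₀, ← f.h, Category.assoc, ← F.map_comp,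
        hf₀])
  refine ⟨k, ⟨f₀ ≫ (D.map a).f, ?_⟩, ?_⟩
  · change (f₀ ≫ (D.obj j).str) ≫ F.map (D.map a).f =
      (R.str ≫ F.map f₀) ≫ F.map (D.map a).f at ha
    rw [F.map_comp, ← Category.assoc, ← ha, Category.assoc, Hom.h, Category.assoc]
  · ext
    change (f₀ ≫ (D.map a).f) ≫ (c.ι.app k).f = f.f
    rw [Category.assoc, ← comp_f, c.w a, hf₀]

lemma isIso_str_of_comp_eq_id {A : Coalgebra F}
    (β : (⟨F.obj A.V, F.map A.str⟩ : Coalgebra F) ⟶ A) (h : A.str ≫ β.f = 𝟙 A.V) :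
    IsIso A.str :=
  ⟨β.f, h, by rw [← β.h, ← F.map_comp, h, F.map_id]⟩

end CategoryTheory.Endofunctor.Coalgebra

open Endofunctor.Coalgebra

section

variable {F : 𝒞 ⥤ 𝒞}

lemma IsRecursive.ofRetract {R : Endofunctor.Coalgebra F} (hR : IsRecursive R) {S : 𝒞}
    (e : Retract R.V S) : IsRecursive (R.ofRetract e) := by
  intro B b
  obtain ⟨h, hh, hu⟩ := hR B b
  refine ⟨e.r ≫ h, ?_, fun k hk => ?_⟩
  · show e.r ≫ h = (R.ofRetract e).str ≫ F.map (e.r ≫ h) ≫ b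
    rw [← Category.assoc, ofRetract_str_map_comp, Category.assoc, Category.assoc, ← hh]
  · have hik : e.i ≫ k = h :=
      hu _ (((R.toOfRetract e).f ≫= hk).trans ((R.toOfRetract e).comp_str_map_comp k b))
    calc k = (R.ofRetract e).str ≫ F.map k ≫ b := hk
      _ = e.r ≫ R.str ≫ F.map (e.i ≫ k) ≫ b := by simp only [F.map_comp, Category.assoc]
      _ = e.r ≫ h := by rw [hik, ← hh]

lemma IsRecursive.of_isColimit {J : Type*} [Category J] {D : J ⥤ Endofunctor.Coalgebra F}
    {c : Cocone D} (hD : ∀ j, IsRecursive (D.obj j)) (hc : IsColimit ((forget F).mapCocone c)) :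
    IsRecursive c.pt := by
  intro B b
  choose e he hu using fun j => hD j B b
  let K : Cocone (D ⋙ forget F) :=
    { pt := B
      ι :=
        { app := e
          naturality := fun j j' m => (hu j _ (((D.map m).f ≫= he j').trans
            ((D.map m).comp_str_map_comp _ b))).trans (Category.comp_id _).symm } }
  obtain ⟨d, hd⟩ : ∃ d : c.pt.V ⟶ B, ∀ j, (c.ι.app j).f ≫ d = e j := ⟨hc.desc K, hc.fac K⟩
  refine ⟨d, hc.hom_ext fun j => ?_, fun y hy => hc.hom_ext fun j => ?_⟩
  · calc (c.ι.app j).f ≫ d = (D.obj j).str ≫ F.map (e j) ≫ b := (hd j).trans (he j)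
      _ = (D.obj j).str ≫ F.map ((c.ι.app j).f ≫ d) ≫ b := by rw [hd]
      _ = (c.ι.app j).f ≫ c.pt.str ≫ F.map d ≫ b :=
        (Hom.comp_str_map_comp (S := c.pt) _ _ _).symm
  · calc (c.ι.app j).f ≫ y = e j :=
          hu j _ (((c.ι.app j).f ≫= hy).trans (Hom.comp_str_map_comp (S := c.pt) _ _ b))
      _ = (c.ι.app j).f ≫ d := (hd j).symm

lemma IsRecursive.existsUnique_inv_str_comp_eq {R : Endofunctor.Coalgebra F}
    (hR : IsRecursive R) [IsIso R.str] {B : 𝒞} (b : F.obj B ⟶ B) :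
    ∃! h : R.V ⟶ B, inv R.str ≫ h = F.map h ≫ b := by
  simpa only [IsIso.inv_comp_eq] using hR B b

lemma LocallyFinrec.nonempty_hom {Fil : Set Cat.{u, u}} {X Y : Endofunctor.Coalgebra F}
    (hX : LocallyFinrec Fil X)
    (hsub : ∀ R, IsRecursive R → FilPresentable Fil R.V → Subsingleton (R ⟶ Y))
    (hne : ∀ R, IsRecursive R → FilPresentable Fil R.V → Nonempty (R ⟶ Y)) :
    Nonempty (X ⟶ Y) := by
  obtain ⟨J, D, c, hD, ⟨hc⟩, rfl⟩ := hX
  let K : Cocone D :=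
    { pt := Y
      ι :=
        { app := fun j => (hne _ (hD j).1 (hD j).2).some
          naturality := fun j _ _ => (hsub _ (hD j).1 (hD j).2).allEq _ _ } }
  exact ⟨(isColimitOfForget hc).desc K⟩

lemma FilAccessibleData.exists_finrecSub_of_isRecursive {Fil : Set Cat.{u, u}}
    (acc : FilAccessibleData Fil 𝒞) {R : Endofunctor.Coalgebra F} (hR : IsRecursive R)
    (hRp : FilPresentable Fil R.V) :
    ∃ (i : FinrecSub F acc.Cp) (s : R ⟶ i.obj),
      ∀ {Y : Endofunctor.Coalgebra F} (f : R ⟶ Y), ∃ g : i.obj ⟶ Y, s ≫ g = f := by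
  obtain ⟨S, hS, ⟨e⟩⟩ := acc.exists_retract hRp
  exact ⟨⟨R.ofRetract e, hR.ofRetract e, hS⟩, R.toOfRetract e,
    fun f => ⟨R.ofRetractHom e f, R.toOfRetract_comp_ofRetractHom e f⟩⟩

section FinrecColimit

variable {Fil : Set Cat.{u, u}} {acc : FilAccessibleData Fil 𝒞}
  {cc : Cocone (ObjectProperty.ι _ : FinrecSub F acc.Cp ⥤ Endofunctor.Coalgebra F)}

lemma eq_cocone_ι_app [IsFiltered (FinrecSub F acc.Cp)]
    (hscheme : Cat.of (FinrecSub F acc.Cp) ∈ Fil)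
    (hcreate : IsColimit ((forget F).mapCocone cc))
    (hFpres : IsColimit (F.mapCocone ((forget F).mapCocone cc)))
    (i : FinrecSub F acc.Cp) (f : i.obj ⟶ cc.pt) : f = cc.ι.app i := by
  obtain ⟨k, g, rfl⟩ :=
    exists_hom_of_isColimit hscheme hcreate hFpres (acc.presentable _ i.property.2) f
  exact cc.w (ObjectProperty.homMk g)

lemma subsingleton_hom_of_isRecursive [IsFiltered (FinrecSub F acc.Cp)]
    (hscheme : Cat.of (FinrecSub F acc.Cp) ∈ Fil)
    (hcreate : IsColimit ((forget F).mapCocone cc))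
    (hFpres : IsColimit (F.mapCocone ((forget F).mapCocone cc)))
    {R : Endofunctor.Coalgebra F} (hR : IsRecursive R) (hRp : FilPresentable Fil R.V) :
    Subsingleton (R ⟶ cc.pt) := by
  obtain ⟨i, s, hs⟩ := acc.exists_finrecSub_of_isRecursive hR hRp
  refine ⟨fun f g => ?_⟩
  obtain ⟨f', rfl⟩ := hs f
  obtain ⟨g', rfl⟩ := hs g
  rw [eq_cocone_ι_app hscheme hcreate hFpres i f', eq_cocone_ι_app hscheme hcreate hFpres i g']

lemma nonempty_hom_of_isRecursive {R : Endofunctor.Coalgebra F} (hR : IsRecursive R)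
    (hRp : FilPresentable Fil R.V) : Nonempty (R ⟶ cc.pt) := by
  obtain ⟨i, s, -⟩ := acc.exists_finrecSub_of_isRecursive hR hRp
  exact ⟨s ≫ cc.ι.app i⟩

lemma isIso_str_of_isColimit [IsFiltered (FinrecSub F acc.Cp)]
    (hscheme : Cat.of (FinrecSub F acc.Cp) ∈ Fil)
    (hcreate : IsColimit ((forget F).mapCocone cc))
    (hFpres : IsColimit (F.mapCocone ((forget F).mapCocone cc)))
    (hiterate : LocallyFinrec Fil
      (⟨F.obj cc.pt.V, F.map cc.pt.str⟩ : Endofunctor.Coalgebra F)) :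
    IsIso cc.pt.str := by
  have hsub := fun R => subsingleton_hom_of_isRecursive hscheme hcreate hFpres (R := R)
  obtain ⟨β⟩ := hiterate.nonempty_hom hsub fun _ => nonempty_hom_of_isRecursive
  have hβ : (⟨cc.pt.str, rfl⟩ : cc.pt ⟶ ⟨F.obj cc.pt.V, F.map cc.pt.str⟩) ≫ β = 𝟙 cc.pt :=
    (isColimitOfForget hcreate).hom_ext fun i =>
      (hsub _ i.property.1 (acc.presentable _ i.property.2)).allEq _ _
  exact isIso_str_of_comp_eq_id β (congrArg Hom.f hβ)

end FinrecColimit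

end

theorem initial_algebra_from_finrec_colimit_general
    (Fil : Set Cat.{u, u}) (hFil : ∀ J ∈ Fil, IsFiltered J)
    (acc : FilAccessibleData Fil 𝒞) (F : 𝒞 ⥤ 𝒞)
    (hscheme : Cat.of (FinrecSub F acc.Cp) ∈ Fil)
    (cc : Cocone (ObjectProperty.ι
      (fun R : Endofunctor.Coalgebra F => IsRecursive R ∧ R.V ∈ acc.Cp)))
    (hcreate : IsColimit ((Endofunctor.Coalgebra.forget F).mapCocone cc))
    (hFpres : IsColimit (F.mapCocone ((Endofunctor.Coalgebra.forget F).mapCocone cc)))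
    (hiterate : LocallyFinrec Fil
      (⟨F.obj cc.pt.V, F.map cc.pt.str⟩ : Endofunctor.Coalgebra F)) :
    ∃ _ : IsIso cc.pt.str,
      ∀ (B : 𝒞) (b : F.obj B ⟶ B),
        ∃! h : cc.pt.V ⟶ B, inv cc.pt.str ≫ h = F.map h ≫ b := by
  have : IsFiltered (FinrecSub F acc.Cp) := hFil _ hscheme
  have hα : IsIso cc.pt.str := isIso_str_of_isColimit hscheme hcreate hFpres hiterate
  exact ⟨hα, fun _ b =>
    (IsRecursive.of_isColimit (fun i => i.property.1) hcreate).existsUnique_inv_str_comp_eq b⟩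

/-- Main theorem: the colimit `(A, α)` of all finrec coalgebras has an invertible
structure map `α`, and `(A, α⁻¹)` is the initial `F`-algebra. -/
theorem initial_algebra_from_finrec_colimit
    (Fil : Set Cat.{u, u}) (hFil : ∀ J ∈ Fil, IsFiltered J)
    (acc : FilAccessibleData Fil 𝒞) (F : 𝒞 ⥤ 𝒞)
    (hcoprod : ∀ X Y : 𝒞, FilPresentable Fil X → FilPresentable Fil Y →
      HasBinaryCoproduct X Y)
    (hscheme : Cat.of (FinrecSub F acc.Cp) ∈ Fil)
    (cc : Cocone (ObjectProperty.ι
      (fun R : Endofunctor.Coalgebra F => IsRecursive R ∧ R.V ∈ acc.Cp)))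
    (hcreate : IsColimit ((Endofunctor.Coalgebra.forget F).mapCocone cc))
    (hFpres : IsColimit (F.mapCocone ((Endofunctor.Coalgebra.forget F).mapCocone cc)))
    (hiterate : LocallyFinrec Fil
      (⟨F.obj cc.pt.V, F.map cc.pt.str⟩ : Endofunctor.Coalgebra F)) :
    ∃ _ : IsIso cc.pt.str,
      ∀ (B : 𝒞) (b : F.obj B ⟶ B),
        ∃! h : cc.pt.V ⟶ B, inv cc.pt.str ≫ h = F.map h ≫ b :=
  initial_algebra_from_finrec_colimit_general Fil hFil acc F hscheme cc hcreate hFpres hiterate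
end

section
/- Let (A, α) be a locally finrec coalgebra arising as colimit of a diagram D : D → F-Coalg of finrec coalgebras with D ∈ Fil, with injections π_i : (X_i, x_i) → (A, α), and suppose F preserves the colimit of V ∘ D. For every t = (P, p, i, p') with P ∈ C_p, p : P → FA, and F π_i ∘ p' = p, the coalgebra on P + X_i with structure F(inr) ∘ [p', x_i] : P + X_i → F(P + X_i) is recursive. -/
open CategoryTheory CategoryTheory.Limits Opposite

universe u

variable {𝒞 : Type u} [Category.{u} 𝒞]

/- If `C.str` factors as `g ≫ F.map m` with `m ≫ g = R.str`, then `m ≫ h` is a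
coalgebra-to-algebra morphism out of `R` whenever `h` is one out of `C`, and `h` is recovered
from it as `g ≫ F.map (m ≫ h) ≫ a`. -/
theorem IsRecursive.of_str_eq_comp_map {F : 𝒞 ⥤ 𝒞} {R C : Endofunctor.Coalgebra F}
    (hR : IsRecursive R) (g : C.V ⟶ F.obj R.V) (m : R.V ⟶ C.V)
    (hstr : C.str = g ≫ F.map m) (hgm : m ≫ g = R.str) : IsRecursive C := by
  intro A a
  obtain ⟨e, he, he_unique⟩ := hR A a
  have restrict : ∀ h : C.V ⟶ A, h = C.str ≫ F.map h ≫ a →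
      m ≫ h = R.str ≫ F.map (m ≫ h) ≫ a := fun h hh => by
      conv_lhs => rw [hh, hstr]
      simp only [← hgm, Category.assoc, F.map_comp]
  refine ⟨g ≫ F.map e ≫ a, ?_, fun h hh => ?_⟩
  · have hme : m ≫ g ≫ F.map e ≫ a = e := by rw [← Category.assoc, hgm, ← he]
    beta_reduce
    rw [hstr, Category.assoc, ← F.map_comp_assoc, hme]
  · rw [hh, hstr, Category.assoc, ← F.map_comp_assoc, he_unique _ (restrict h hh)]

theorem triangle_coalgebra_recursive_general
    (Fil : Set Cat.{u, u})
    (acc : FilAccessibleData Fil 𝒞) (F : 𝒞 ⥤ 𝒞)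
    (hcoprod : ∀ X Y : 𝒞, FilPresentable Fil X → FilPresentable Fil Y →
      HasBinaryCoproduct X Y)
    (J : Cat.{u, u})
    (D : J ⥤ Endofunctor.Coalgebra F)
    (hfinrec : ∀ j : J, IsRecursive (D.obj j) ∧ FilPresentable Fil (D.obj j).V)
    (P : 𝒞) (hP : P ∈ acc.Cp)
    (i : J)
    (p' : P ⟶ F.obj (D.obj i).V) :
    haveI : HasBinaryCoproduct P (D.obj i).V :=
      hcoprod P (D.obj i).V (acc.presentable P hP) (hfinrec i).2
    IsRecursive (⟨P ⨿ (D.obj i).V,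
      Limits.coprod.desc p' (D.obj i).str ≫ F.map Limits.coprod.inr⟩ :
        Endofunctor.Coalgebra F) :=
  haveI : HasBinaryCoproduct P (D.obj i).V :=
    hcoprod P (D.obj i).V (acc.presentable P hP) (hfinrec i).2
  (hfinrec i).1.of_str_eq_comp_map (coprod.desc p' (D.obj i).str) coprod.inr rfl
    (coprod.inr_desc _ _)

/-- Let `(A, α) = cc.pt` be a locally finrec coalgebra arising as the colimit (with
injections `π_i = cc.ι.app i`) of a diagram `D : J ⥤ F-Coalg` of finrec coalgebras
with `J ∈ Fil`, created from a colimit in `𝒞` that is preserved by `F`. For every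
`t = (P, p, i, p')` with `P ∈ Cp`, `p : P ⟶ F A` and `F π_i ∘ p' = p`, the coalgebra
on `P + X_i` with structure `F(inr) ∘ [p', x_i]` is recursive. -/
theorem triangle_coalgebra_recursive
    (Fil : Set Cat.{u, u}) (hFil : ∀ J ∈ Fil, IsFiltered J)
    (acc : FilAccessibleData Fil 𝒞) (F : 𝒞 ⥤ 𝒞)
    (hcoprod : ∀ X Y : 𝒞, FilPresentable Fil X → FilPresentable Fil Y →
      HasBinaryCoproduct X Y)
    (J : Cat.{u, u}) (hJ : J ∈ Fil)
    (D : J ⥤ Endofunctor.Coalgebra F)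
    (hfinrec : ∀ j : J, IsRecursive (D.obj j) ∧ FilPresentable Fil (D.obj j).V)
    (cc : Cocone D)
    (hcreate : IsColimit ((Endofunctor.Coalgebra.forget F).mapCocone cc))
    (hFpres : IsColimit (F.mapCocone ((Endofunctor.Coalgebra.forget F).mapCocone cc)))
    (P : 𝒞) (hP : P ∈ acc.Cp)
    (p : P ⟶ F.obj cc.pt.V) (i : J)
    (p' : P ⟶ F.obj (D.obj i).V)
    (htri : p' ≫ F.map (cc.ι.app i).f = p) :
    haveI : HasBinaryCoproduct P (D.obj i).V :=
      hcoprod P (D.obj i).V (acc.presentable P hP) (hfinrec i).2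
    IsRecursive (⟨P ⨿ (D.obj i).V,
      Limits.coprod.desc p' (D.obj i).str ≫ F.map Limits.coprod.inr⟩ :
        Endofunctor.Coalgebra F) :=
  triangle_coalgebra_recursive_general Fil acc F hcoprod J D hfinrec P hP i p'
end
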